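/- (Raychaudhuri equation) Let (M⁴, 𝐠) satisfy the Einstein equations with irrotational unit timelike flow u, expansion θ, trace-free shear σ, acceleration X = ∇_u u, energy density μ and pressure p from the decomposition κT_{ab} = μ u_a u_b + q_a u_b + q_b u_a + p g_{ab} + π_{ab}. Then θ̇ = -|σ|² - (1/3)θ² - (1/2)(μ + 3p) + Λ + div X + |X|², where θ̇ = u(θ) and div is the spatial divergence on the slice orthogonal to u. -/

import Mathlib

noncomputable section

/-- Points of a synchronous local coordinate chart `(t, x¹, x², x³)` for the spacetime;
the coordinate `x 0` is the time coordinate `t` and `x 1, x 2, x 3` are spatial.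
Such coordinates exist about any point of a spatial section precisely because the
unit timelike flow `u` of matter is irrotational, and in them `𝐠 = -φ² dt² + g_{ij} dx^i dx^j`
with `u = φ⁻¹ ∂_t`, the slices `{t = const}` being the spatial sections orthogonal to `u`. -/
abbrev SpacetimePt : Type := Fin 4 → ℝ

namespace GR

/-- The partial derivative `∂_a f` of a real valued function on the chart. -/
def pd (a : Fin 4) (f : SpacetimePt → ℝ) (x : SpacetimePt) : ℝ :=
  fderiv ℝ f x (Pi.single a 1)

/-- The spatial partial derivative `∂_i f` (`i` a spatial index). -/
def pd3 (i : Fin 3) (f : SpacetimePt → ℝ) (x : SpacetimePt) : ℝ :=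
  pd i.succ f x

variable (φ : SpacetimePt → ℝ) (gs : SpacetimePt → Matrix (Fin 3) (Fin 3) ℝ)

/-- The Lorentzian metric `𝐠 = -φ² dt² + g_{ij}(t,x) dx^i dx^j` in the chart. -/
def g4 (x : SpacetimePt) : Matrix (Fin 4) (Fin 4) ℝ :=
  Matrix.of fun a b =>
    Fin.cases (Fin.cases (-(φ x) ^ 2) (fun _ => 0) b)
      (fun i => Fin.cases 0 (fun j => gs x i j) b) a

/-- The inverse spacetime metric `𝐠^{ab}`. -/
def ginv4 (x : SpacetimePt) : Matrix (Fin 4) (Fin 4) ℝ := (g4 φ gs x)⁻¹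

/-- The Christoffel symbols `Γ^a_{bc}` of `𝐠`. -/
def Γ4 (a b c : Fin 4) (x : SpacetimePt) : ℝ :=
  (1 / 2) * ∑ d, ginv4 φ gs x a d *
    (pd b (fun y => g4 φ gs y d c) x + pd c (fun y => g4 φ gs y b d) x
      - pd d (fun y => g4 φ gs y b c) x)

/-- The spacetime curvature tensor components `𝐑^a_{bcd}`, with the convention
`𝐑(Y,Z)W = ∇_Y ∇_Z W - ∇_Z ∇_Y W - ∇_{[Y,Z]} W`. -/
def Riem4 (a b c d : Fin 4) (x : SpacetimePt) : ℝ :=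
  pd c (Γ4 φ gs a d b) x - pd d (Γ4 φ gs a c b) x +
    ∑ e, (Γ4 φ gs a c e x * Γ4 φ gs e d b x - Γ4 φ gs a d e x * Γ4 φ gs e c b x)

/-- The spacetime Ricci tensor `𝐑_{bd} = 𝐑^a_{bad}`. -/
def Ric4 (b d : Fin 4) (x : SpacetimePt) : ℝ := ∑ a, Riem4 φ gs a b a d x

/-- The spacetime scalar curvature `𝐑`. -/
def Scal4 (x : SpacetimePt) : ℝ := ∑ b, ∑ d, ginv4 φ gs x b d * Ric4 φ gs b d x

/-- The components of the unit timelike vector field `u = φ⁻¹ ∂_t`. -/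
def uvec (x : SpacetimePt) : Fin 4 → ℝ := fun a => Fin.cases (φ x)⁻¹ (fun _ => 0) a

/-- The 1-form `u_b = 𝐠_{ba} u^a`. -/
def ulow (b : Fin 4) (x : SpacetimePt) : ℝ := ∑ a, g4 φ gs x b a * uvec φ x a

/-- The covariant derivative `∇_a u_b = ∂_a u_b - Γ^c_{ab} u_c`. -/
def Du (a b : Fin 4) (x : SpacetimePt) : ℝ :=
  pd a (ulow φ gs b) x - ∑ c, Γ4 φ gs c a b x * ulow φ gs c x

/-- The acceleration 1-form `X_b = u^a ∇_a u_b` (the covector of `X = ∇_u u`). -/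
def Xlow (b : Fin 4) (x : SpacetimePt) : ℝ := ∑ a, uvec φ x a * Du φ gs a b x

/-- The spatial projection metric `g_{ab} = 𝐠_{ab} + u_a u_b`. -/
def gproj (a b : Fin 4) (x : SpacetimePt) : ℝ :=
  g4 φ gs x a b + ulow φ gs a x * ulow φ gs b x

/-- The volume expansion scalar `θ = ∇_i u^i = 𝐠^{ab} ∇_a u_b`. -/
def θexp (x : SpacetimePt) : ℝ := ∑ a, ∑ b, ginv4 φ gs x a b * Du φ gs a b x

/-- The shear tensor `σ_{ab} = ∇_a u_b + u_a X_b - (θ/3) g_{ab}`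
(from the irreducible decomposition `∇_a u_b = -u_a X_b + (θ/3) g_{ab} + σ_{ab} + ω_{ab}`;
the vorticity `ω` vanishes automatically for the hypersurface orthogonal `u = φ⁻¹ ∂_t`). -/
def shear (a b : Fin 4) (x : SpacetimePt) : ℝ :=
  Du φ gs a b x + ulow φ gs a x * Xlow φ gs b x - (θexp φ gs x / 3) * gproj φ gs a b x

/-- The squared norm `|σ|² = σ_{ab} σ^{ab}` of the shear. -/
def shear2 (x : SpacetimePt) : ℝ :=
  ∑ a, ∑ b, ∑ c, ∑ d, ginv4 φ gs x a c * ginv4 φ gs x b d *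
    shear φ gs a b x * shear φ gs c d x

/-- `σ̇ = ∇_u σ`, the covariant derivative of the shear along `u`. -/
def sheardot (a b : Fin 4) (x : SpacetimePt) : ℝ :=
  ∑ c, uvec φ x c * (pd c (shear φ gs a b) x
    - ∑ d, Γ4 φ gs d c a x * shear φ gs d b x
    - ∑ d, Γ4 φ gs d c b x * shear φ gs a d x)

/-- The inverse `g^{ij}` of the induced spatial metric on a slice `{t = const}`. -/
def gsinv (x : SpacetimePt) : Matrix (Fin 3) (Fin 3) ℝ := (gs x)⁻¹

/-- The Christoffel symbols `Γ^i_{jk}` of the induced metric `g` on a slice. -/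
def Γ3 (i j k : Fin 3) (x : SpacetimePt) : ℝ :=
  (1 / 2) * ∑ l, gsinv gs x i l *
    (pd3 j (fun y => gs y l k) x + pd3 k (fun y => gs y j l) x - pd3 l (fun y => gs y j k) x)

/-- The curvature tensor `R^i_{jkl}` of the induced metric `g` on a slice. -/
def Riem3 (i j k l : Fin 3) (x : SpacetimePt) : ℝ :=
  pd3 k (Γ3 gs i l j) x - pd3 l (Γ3 gs i k j) x +
    ∑ m, (Γ3 gs i k m x * Γ3 gs m l j x - Γ3 gs i l m x * Γ3 gs m k j x)

/-- The Ricci tensor `R_{jl}` of the induced metric `g` on a slice. -/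
def Ric3 (j l : Fin 3) (x : SpacetimePt) : ℝ := ∑ i, Riem3 gs i j i l x

/-- The scalar curvature `R` of the induced metric `g` on a slice. -/
def Scal3 (x : SpacetimePt) : ℝ := ∑ j, ∑ l, gsinv gs x j l * Ric3 gs j l x

/-- The spatial components `X_i` of the acceleration `X` (which is tangent to the slices). -/
def Xs (i : Fin 3) (x : SpacetimePt) : ℝ := Xlow φ gs i.succ x

/-- The spatial covariant derivative `∇_i X_j` of the acceleration on a slice. -/
def D3X (i j : Fin 3) (x : SpacetimePt) : ℝ :=
  pd3 i (Xs φ gs j) x - ∑ k, Γ3 gs k i j x * Xs φ gs k x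

/-- The spatial divergence `div X = g^{ij} ∇_i X_j` on a slice. -/
def divX (x : SpacetimePt) : ℝ := ∑ i, ∑ j, gsinv gs x i j * D3X φ gs i j x

/-- The squared norm `|X|² = g^{ij} X_i X_j`. -/
def X2 (x : SpacetimePt) : ℝ := ∑ i, ∑ j, gsinv gs x i j * Xs φ gs i x * Xs φ gs j x

/-- Trace-free symmetrization `T_{⟨ij⟩}` of a spatial 2-tensor with respect to `g`. -/
def tfs (T : Fin 3 → Fin 3 → SpacetimePt → ℝ) (i j : Fin 3) (x : SpacetimePt) : ℝ :=
  (1 / 2) * (T i j x + T j i x)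
    - (1 / 3) * (∑ k, ∑ l, gsinv gs x k l * T k l x) * gs x i j

end GR

namespace GR

variable (φ : SpacetimePt → ℝ) (gs : SpacetimePt → Matrix (Fin 3) (Fin 3) ℝ)

/-- `θ̇ = u(θ)`, the derivative of the expansion along `u`. -/
def θdot (x : SpacetimePt) : ℝ := ∑ b, uvec φ x b * pd b (θexp φ gs) x

end GR

namespace GR
namespace Aux

lemma pd_congr {f g : SpacetimePt → ℝ} (h : ∀ y, f y = g y) (a : Fin 4) (x : SpacetimePt) :
    pd a f x = pd a g x := by rw [show f = g from funext h]

lemma pd_const (c : ℝ) (a : Fin 4) (x : SpacetimePt) : pd a (fun _ => c) x = 0 := by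
  simp [pd]

lemma pd_add {f g : SpacetimePt → ℝ} {x : SpacetimePt} (hf : DifferentiableAt ℝ f x)
    (hg : DifferentiableAt ℝ g x) (a : Fin 4) :
    pd a (fun y => f y + g y) x = pd a f x + pd a g x := by
  simp [pd, fderiv_fun_add hf hg]

lemma pd_neg {f : SpacetimePt → ℝ} (a : Fin 4) (x : SpacetimePt) :
    pd a (fun y => -f y) x = -pd a f x := by
  simp [pd, fderiv_neg]

lemma pd_sub {f g : SpacetimePt → ℝ} {x : SpacetimePt} (hf : DifferentiableAt ℝ f x)
    (hg : DifferentiableAt ℝ g x) (a : Fin 4) :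
    pd a (fun y => f y - g y) x = pd a f x - pd a g x := by
  simp [pd, fderiv_fun_sub hf hg]

lemma pd_mul {f g : SpacetimePt → ℝ} {x : SpacetimePt} (hf : DifferentiableAt ℝ f x)
    (hg : DifferentiableAt ℝ g x) (a : Fin 4) :
    pd a (fun y => f y * g y) x = pd a f x * g x + f x * pd a g x := by
  simp [pd, fderiv_fun_mul hf hg]; ring

lemma pd_inv {f : SpacetimePt → ℝ} {x : SpacetimePt} (hf : DifferentiableAt ℝ f x)
    (h0 : f x ≠ 0) (a : Fin 4) :
    pd a (fun y => (f y)⁻¹) x = -(pd a f x) / (f x) ^ 2 := by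
  have h : HasFDerivAt (fun y => (f y)⁻¹)
      ((-ContinuousLinearMap.mulLeftRight ℝ ℝ (f x)⁻¹ (f x)⁻¹).comp (fderiv ℝ f x)) x :=
    (hasFDerivAt_inv' h0).comp x hf.hasFDerivAt
  rw [pd, h.fderiv]
  simp [ContinuousLinearMap.mulLeftRight_apply, pd]
  rw [sq]
  field_simp

lemma pd_const_mul {f : SpacetimePt → ℝ} {x : SpacetimePt} (hf : DifferentiableAt ℝ f x)
    (c : ℝ) (a : Fin 4) :
    pd a (fun y => c * f y) x = c * pd a f x := by
  simp [pd, fderiv_const_mul hf]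

lemma pd_sum {ι : Type*} (s : Finset ι) {F : ι → SpacetimePt → ℝ} {x : SpacetimePt}
    (hF : ∀ i ∈ s, DifferentiableAt ℝ (F i) x) (a : Fin 4) :
    pd a (fun y => ∑ i ∈ s, F i y) x = ∑ i ∈ s, pd a (F i) x := by
  simp [pd, fderiv_fun_sum hF]

open scoped ContDiff in
lemma contDiff_pd {f : SpacetimePt → ℝ} (hf : ContDiff ℝ ∞ f) (a : Fin 4) :
    ContDiff ℝ ∞ (pd a f) := by
  have h := (contDiff_infty_iff_fderiv.mp hf).2
  exact h.clm_apply contDiff_const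

open scoped ContDiff in
lemma diffAt {f : SpacetimePt → ℝ} (hf : ContDiff ℝ ∞ f) (x : SpacetimePt) :
    DifferentiableAt ℝ f x := (hf.differentiable (by simp)) x

open scoped ContDiff
open Matrix

section Matrices
variable {gs : SpacetimePt → Matrix (Fin 3) (Fin 3) ℝ}
  (hgs : ∀ i j : Fin 3, ContDiff ℝ (⊤ : ℕ∞) fun x => gs x i j)
  (hgspd : ∀ x, (gs x).PosDef)
include hgspd

lemma Asym (x : SpacetimePt) (i j : Fin 3) : gs x i j = gs x j i := by
  conv_lhs => rw [← (hgspd x).isHermitian]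
  simp [Matrix.conjTranspose_apply]

lemma detne (x : SpacetimePt) : (gs x).det ≠ 0 := ne_of_gt (hgspd x).det_pos

lemma BA (x : SpacetimePt) (i j : Fin 3) :
    ∑ k, gsinv gs x i k * gs x k j = if i = j then 1 else 0 := by
  have h : gsinv gs x * gs x = 1 := Matrix.nonsing_inv_mul _ (detne hgspd x).isUnit
  have := congrFun (congrFun h i) j
  rwa [Matrix.mul_apply, Matrix.one_apply] at this

lemma AB (x : SpacetimePt) (i j : Fin 3) :
    ∑ k, gs x i k * gsinv gs x k j = if i = j then 1 else 0 := by
  have h : gs x * gsinv gs x = 1 := Matrix.mul_nonsing_inv _ (detne hgspd x).isUnit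
  have := congrFun (congrFun h i) j
  rwa [Matrix.mul_apply, Matrix.one_apply] at this

lemma Bsym (x : SpacetimePt) (i j : Fin 3) : gsinv gs x i j = gsinv gs x j i := by
  have hT : (gs x)ᵀ = gs x := by
    ext i j; exact Asym hgspd x j i
  have h : ((gs x)⁻¹)ᵀ = (gs x)⁻¹ := by
    rw [Matrix.transpose_nonsing_inv, hT]
  have := congrFun (congrFun h j) i
  simpa [Matrix.transpose_apply, gsinv] using this

omit hgspd in
include hgs in
lemma contDiff_det : ContDiff ℝ ∞ (fun x => (gs x).det) := by
  simp only [Matrix.det_fin_three]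
  have h : ∀ i j : Fin 3, ContDiff ℝ ∞ fun x => gs x i j := fun i j => (hgs i j).of_le (by simp)
  fun_prop

omit hgspd in
include hgs in
lemma contDiff_adj (i j : Fin 3) : ContDiff ℝ ∞ (fun x => (gs x).adjugate i j) := by
  have h : ∀ i j : Fin 3, ContDiff ℝ ∞ fun x => gs x i j := fun i j => (hgs i j).of_le (by simp)
  fin_cases i <;> fin_cases j <;> simp [Matrix.adjugate_fin_three] <;> fun_prop

omit hgspd in
lemma gsinv_eq (x : SpacetimePt) (i j : Fin 3) :
    gsinv gs x i j = ((gs x).det)⁻¹ * (gs x).adjugate i j := by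
  rw [gsinv, Matrix.inv_def, Matrix.smul_apply, Ring.inverse_eq_inv, smul_eq_mul]

include hgs in
lemma contDiff_B (i j : Fin 3) : ContDiff ℝ ∞ (fun x => gsinv gs x i j) := by
  have : (fun x => gsinv gs x i j) = fun x => ((gs x).det)⁻¹ * (gs x).adjugate i j :=
    funext fun x => gsinv_eq x i j
  rw [this]
  exact ((contDiff_det hgs).inv (fun x => detne hgspd x)).mul (contDiff_adj hgs i j)

omit hgspd in
lemma pd_const' {f : SpacetimePt → ℝ} (c : ℝ) (h : ∀ y, f y = c) (a : Fin 4) (x : SpacetimePt) :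
    pd a f x = 0 := by
  rw [show f = fun _ => c from funext h]; simp [pd]

include hgs hgspd in
lemma pd_B (c : Fin 4) (x : SpacetimePt) (i l : Fin 3) :
    pd c (fun y => gsinv gs y i l) x
      = -∑ j, ∑ k, gsinv gs x i k * pd c (fun y => gs y k j) x * gsinv gs x j l := by
  have hA : ∀ i j : Fin 3, ContDiff ℝ ∞ fun x => gs x i j := fun i j => (hgs i j).of_le (by simp)
  have dB : ∀ (i j : Fin 3) (y : SpacetimePt), DifferentiableAt ℝ (fun z => gsinv gs z i j) y :=
    fun i j y => diffAt (contDiff_B hgs hgspd i j) y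
  have dA : ∀ (i j : Fin 3) (y : SpacetimePt), DifferentiableAt ℝ (fun z => gs z i j) y :=
    fun i j y => diffAt (hA i j) y
  have key : ∀ j : Fin 3, ∑ k, pd c (fun y => gsinv gs y i k) x * gs x k j
      = -∑ k, gsinv gs x i k * pd c (fun y => gs y k j) x := by
    intro j
    have h0 : pd c (fun y => ∑ k, gsinv gs y i k * gs y k j) x = 0 :=
      pd_const' _ (fun y => BA hgspd y i j) c x
    rw [pd_sum _ (fun k _ => (dB i k x).fun_mul (dA k j x))] at h0
    have h1 : ∀ k : Fin 3, pd c (fun y => gsinv gs y i k * gs y k j) x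
        = pd c (fun y => gsinv gs y i k) x * gs x k j
          + gsinv gs x i k * pd c (fun y => gs y k j) x := fun k =>
      pd_mul (dB i k x) (dA k j x) c
    rw [Finset.sum_congr rfl (fun k _ => h1 k), Finset.sum_add_distrib] at h0
    linarith [h0]
  calc pd c (fun y => gsinv gs y i l) x
      = ∑ k, pd c (fun y => gsinv gs y i k) x * (if k = l then 1 else 0) := by
        simp
    _ = ∑ k, pd c (fun y => gsinv gs y i k) x * (∑ j, gs x k j * gsinv gs x j l) := by
        exact Finset.sum_congr rfl fun k _ => by rw [AB hgspd x k l]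
    _ = ∑ j, (∑ k, pd c (fun y => gsinv gs y i k) x * gs x k j) * gsinv gs x j l := by
        simp only [Finset.mul_sum, Finset.sum_mul]
        rw [Finset.sum_comm]
        exact Finset.sum_congr rfl fun j _ => Finset.sum_congr rfl fun k _ => by ring
    _ = ∑ j, (-∑ k, gsinv gs x i k * pd c (fun y => gs y k j) x) * gsinv gs x j l := by
        exact Finset.sum_congr rfl fun j _ => by rw [key j]
    _ = -∑ j, ∑ k, gsinv gs x i k * pd c (fun y => gs y k j) x * gsinv gs x j l := by
        rw [← Finset.sum_neg_distrib]
        exact Finset.sum_congr rfl fun j _ => by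
          rw [neg_mul, Finset.sum_mul]
end Matrices

section Components
open scoped ContDiff
variable (φ : SpacetimePt → ℝ) (gs : SpacetimePt → Matrix (Fin 3) (Fin 3) ℝ)
variable (hφ : ContDiff ℝ (⊤ : ℕ∞) φ) (hφpos : ∀ x, 0 < φ x)
  (hgs : ∀ i j : Fin 3, ContDiff ℝ (⊤ : ℕ∞) fun x => gs x i j)
  (hgspd : ∀ x, (gs x).PosDef)

omit hgspd

include hφ in
lemma sφ : ContDiff ℝ ∞ φ := hφ.of_le (by simp)

include hgs in
lemma sA (i j : Fin 3) : ContDiff ℝ ∞ fun x => gs x i j := (hgs i j).of_le (by simp)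

include hgs hgspd in
lemma sB (i j : Fin 3) : ContDiff ℝ ∞ fun x => gsinv gs x i j := contDiff_B hgs hgspd i j

include hφpos in
lemma φne (x : SpacetimePt) : φ x ≠ 0 := ne_of_gt (hφpos x)

omit hφ hφpos hgs

lemma g4_00 (x : SpacetimePt) : g4 φ gs x 0 0 = -(φ x) ^ 2 := by simp [g4]

lemma g4_0s (x : SpacetimePt) (j : Fin 3) : g4 φ gs x 0 j.succ = 0 := by simp [g4]

lemma g4_s0 (x : SpacetimePt) (i : Fin 3) : g4 φ gs x i.succ 0 = 0 := by simp [g4]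

lemma g4_ss (x : SpacetimePt) (i j : Fin 3) : g4 φ gs x i.succ j.succ = gs x i j := by
  simp [g4]

include hφpos hgspd in
lemma ginv4_eq (x : SpacetimePt) :
    ginv4 φ gs x = Matrix.of (fun a b =>
      Fin.cases (Fin.cases (-((φ x) ^ 2)⁻¹) (fun _ => 0) b)
        (fun i => Fin.cases 0 (fun j => gsinv gs x i j) b) a) := by
  apply Matrix.inv_eq_right_inv
  ext a b
  rw [Matrix.mul_apply, Fin.sum_univ_succ]
  induction a using Fin.cases with
  | zero =>
    induction b using Fin.cases with
    | zero =>
      simp [g4_00 φ gs, g4_0s φ gs, Matrix.one_apply]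
      exact div_self (pow_ne_zero 2 (ne_of_gt (hφpos x)))
    | succ j =>
      simp [g4_00 φ gs, g4_0s φ gs, Matrix.one_apply, (Fin.succ_ne_zero j).symm]
  | succ i =>
    induction b using Fin.cases with
    | zero => simp [g4_s0 φ gs, g4_ss φ gs, Matrix.one_apply, Fin.succ_ne_zero]
    | succ j =>
      simp only [Matrix.of_apply, Fin.cases_zero, Fin.cases_succ, g4_s0, g4_ss, zero_mul,
        zero_add, Matrix.one_apply, Fin.succ_inj]
      exact AB hgspd x i j

include hφpos hgspd in
lemma iv00 (x : SpacetimePt) : ginv4 φ gs x 0 0 = -((φ x) ^ 2)⁻¹ := by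
  rw [ginv4_eq φ gs hφpos hgspd]; simp

include hφpos hgspd in
lemma iv0s (x : SpacetimePt) (j : Fin 3) : ginv4 φ gs x 0 j.succ = 0 := by
  rw [ginv4_eq φ gs hφpos hgspd]; simp

include hφpos hgspd in
lemma ivs0 (x : SpacetimePt) (i : Fin 3) : ginv4 φ gs x i.succ 0 = 0 := by
  rw [ginv4_eq φ gs hφpos hgspd]; simp

include hφpos hgspd in
lemma ivss (x : SpacetimePt) (i j : Fin 3) : ginv4 φ gs x i.succ j.succ = gsinv gs x i j := by
  rw [ginv4_eq φ gs hφpos hgspd]; simp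

include hφ in
lemma pdg4_00 (c : Fin 4) (x : SpacetimePt) :
    pd c (fun y => g4 φ gs y 0 0) x = -(2 * φ x * pd c φ x) := by
  rw [pd_congr (fun y => g4_00 φ gs y) c x]
  have h1 : pd c (fun y => -(φ y) ^ 2) x = pd c (fun y => -(φ y * φ y)) x :=
    pd_congr (fun y => by ring) c x
  rw [h1, pd_neg, pd_mul (diffAt (sφ φ hφ) x) (diffAt (sφ φ hφ) x)]
  ring

lemma pdg4_0s (c : Fin 4) (x : SpacetimePt) (j : Fin 3) :
    pd c (fun y => g4 φ gs y 0 j.succ) x = 0 :=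
  pd_const' 0 (fun y => g4_0s φ gs y j) c x

lemma pdg4_s0 (c : Fin 4) (x : SpacetimePt) (i : Fin 3) :
    pd c (fun y => g4 φ gs y i.succ 0) x = 0 :=
  pd_const' 0 (fun y => g4_s0 φ gs y i) c x

lemma pdg4_ss (c : Fin 4) (x : SpacetimePt) (i j : Fin 3) :
    pd c (fun y => g4 φ gs y i.succ j.succ) x = pd c (fun y => gs y i j) x :=
  pd_congr (fun y => g4_ss φ gs y i j) c x

include hφ hφpos hgspd in
lemma Γ4_000 (x : SpacetimePt) : Γ4 φ gs 0 0 0 x = (φ x)⁻¹ * pd 0 φ x := by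
  rw [Γ4, Fin.sum_univ_succ]
  simp only [iv00 φ gs hφpos hgspd, iv0s φ gs hφpos hgspd, zero_mul, Finset.sum_const_zero,
    add_zero, pdg4_00 φ gs hφ]
  have h := φne φ hφpos x
  field_simp
  ring

include hφ hφpos hgspd in
lemma Γ4_00s (x : SpacetimePt) (j : Fin 3) :
    Γ4 φ gs 0 0 j.succ x = (φ x)⁻¹ * pd j.succ φ x := by
  rw [Γ4, Fin.sum_univ_succ]
  simp only [iv00 φ gs hφpos hgspd, iv0s φ gs hφpos hgspd, zero_mul, Finset.sum_const_zero,
    add_zero, pdg4_00 φ gs hφ, pdg4_0s φ gs]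
  have h := φne φ hφpos x
  field_simp
  ring

include hφ hφpos hgspd in
lemma Γ4_0s0 (x : SpacetimePt) (i : Fin 3) :
    Γ4 φ gs 0 i.succ 0 x = (φ x)⁻¹ * pd i.succ φ x := by
  rw [Γ4, Fin.sum_univ_succ]
  simp only [iv00 φ gs hφpos hgspd, iv0s φ gs hφpos hgspd, zero_mul, Finset.sum_const_zero,
    add_zero, pdg4_00 φ gs hφ, pdg4_s0 φ gs]
  have h := φne φ hφpos x
  field_simp
  ring

include hφ hφpos hgspd in
lemma Γ4_0ss (x : SpacetimePt) (i j : Fin 3) :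
    Γ4 φ gs 0 i.succ j.succ x = ((φ x) ^ 2)⁻¹ * ((1 / 2) * pd 0 (fun y => gs y i j) x) := by
  rw [Γ4, Fin.sum_univ_succ]
  simp only [iv00 φ gs hφpos hgspd, iv0s φ gs hφpos hgspd, zero_mul, Finset.sum_const_zero,
    add_zero, pdg4_0s φ gs, pdg4_s0 φ gs, pdg4_ss φ gs]
  ring

include hφ hφpos hgspd in
lemma Γ4_s00 (x : SpacetimePt) (i : Fin 3) :
    Γ4 φ gs i.succ 0 0 x = ∑ l, gsinv gs x i l * (φ x * pd l.succ φ x) := by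
  rw [Γ4, Fin.sum_univ_succ]
  simp only [ivs0 φ gs hφpos hgspd, ivss φ gs hφpos hgspd, zero_mul, zero_add,
    pdg4_00 φ gs hφ, pdg4_0s φ gs, pdg4_s0 φ gs]
  rw [Finset.mul_sum]
  exact Finset.sum_congr rfl fun l _ => by ring

include hφ hφpos hgspd in
lemma Γ4_s0s (x : SpacetimePt) (i k : Fin 3) :
    Γ4 φ gs i.succ 0 k.succ x
      = (1 / 2) * ∑ l, gsinv gs x i l * pd 0 (fun y => gs y l k) x := by
  rw [Γ4, Fin.sum_univ_succ]
  simp only [ivs0 φ gs hφpos hgspd, ivss φ gs hφpos hgspd, zero_mul, zero_add,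
    pdg4_0s φ gs, pdg4_ss φ gs]
  rw [Finset.mul_sum, Finset.mul_sum]
  exact Finset.sum_congr rfl fun l _ => by ring

include hφ hφpos hgspd in
lemma Γ4_ss0 (x : SpacetimePt) (i j : Fin 3) :
    Γ4 φ gs i.succ j.succ 0 x
      = (1 / 2) * ∑ l, gsinv gs x i l * pd 0 (fun y => gs y j l) x := by
  rw [Γ4, Fin.sum_univ_succ]
  simp only [ivs0 φ gs hφpos hgspd, ivss φ gs hφpos hgspd, zero_mul, zero_add,
    pdg4_s0 φ gs, pdg4_ss φ gs]
  rw [Finset.mul_sum, Finset.mul_sum]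
  exact Finset.sum_congr rfl fun l _ => by ring

include hφpos hgspd in
lemma Γ4_sss (x : SpacetimePt) (i j k : Fin 3) :
    Γ4 φ gs i.succ j.succ k.succ x = Γ3 gs i j k x := by
  rw [Γ4, Γ3, Fin.sum_univ_succ]
  simp only [ivs0 φ gs hφpos hgspd, ivss φ gs hφpos hgspd, zero_mul, zero_add,
    pdg4_ss φ gs, pd3]

lemma sum4 (f : Fin 4 → ℝ) : ∑ a, f a = f 0 + ∑ i : Fin 3, f i.succ := Fin.sum_univ_succ f

lemma uvec_0 (x : SpacetimePt) : uvec φ x 0 = (φ x)⁻¹ := rfl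

lemma uvec_s (x : SpacetimePt) (i : Fin 3) : uvec φ x i.succ = 0 := by simp [uvec]

include hφpos in
lemma ulow_0 (x : SpacetimePt) : ulow φ gs 0 x = -φ x := by
  rw [ulow, sum4]
  simp only [uvec_0, uvec_s, mul_zero, Finset.sum_const_zero, add_zero, g4_00]
  have h := φne φ hφpos x
  field_simp

lemma ulow_s (x : SpacetimePt) (j : Fin 3) : ulow φ gs j.succ x = 0 := by
  rw [ulow, sum4]
  simp [uvec_0, uvec_s, g4_s0]

include hφ hφpos hgspd in
lemma Du_00 (x : SpacetimePt) : Du φ gs 0 0 x = 0 := by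
  rw [Du, sum4, pd_congr (fun y => ulow_0 φ gs hφpos y) 0 x]
  have h1 : pd 0 (fun y => -φ y) x = -pd 0 φ x := pd_neg 0 x
  simp only [h1, ulow_0 φ gs hφpos, ulow_s, mul_zero, Finset.sum_const_zero, add_zero,
    Γ4_000 φ gs hφ hφpos hgspd]
  have h := φne φ hφpos x
  field_simp
  ring

include hφ hφpos hgspd in
lemma Du_0s (x : SpacetimePt) (j : Fin 3) : Du φ gs 0 j.succ x = pd j.succ φ x := by
  rw [Du, sum4, pd_const' 0 (fun y => ulow_s φ gs y j) 0 x]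
  simp only [ulow_0 φ gs hφpos, ulow_s, mul_zero, Finset.sum_const_zero, add_zero,
    Γ4_00s φ gs hφ hφpos hgspd]
  have h := φne φ hφpos x
  field_simp
  ring

include hφ hφpos hgspd in
lemma Du_s0 (x : SpacetimePt) (i : Fin 3) : Du φ gs i.succ 0 x = 0 := by
  rw [Du, sum4, pd_congr (fun y => ulow_0 φ gs hφpos y) i.succ x]
  have h1 : pd i.succ (fun y => -φ y) x = -pd i.succ φ x := pd_neg i.succ x
  simp only [h1, ulow_0 φ gs hφpos, ulow_s, mul_zero, Finset.sum_const_zero, add_zero,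
    Γ4_0s0 φ gs hφ hφpos hgspd]
  have h := φne φ hφpos x
  field_simp
  ring

include hφ hφpos hgspd in
lemma Du_ss (x : SpacetimePt) (i j : Fin 3) :
    Du φ gs i.succ j.succ x = (1 / 2) * (φ x)⁻¹ * pd 0 (fun y => gs y i j) x := by
  rw [Du, sum4, pd_const' 0 (fun y => ulow_s φ gs y j) i.succ x]
  simp only [ulow_0 φ gs hφpos, ulow_s, mul_zero, Finset.sum_const_zero, add_zero,
    Γ4_0ss φ gs hφ hφpos hgspd]
  have h := φne φ hφpos x
  field_simp
  ring

include hφ hφpos hgspd in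
lemma θexp_eq (x : SpacetimePt) :
    θexp φ gs x
      = (1 / 2) * (φ x)⁻¹ * ∑ i, ∑ j, gsinv gs x i j * pd 0 (fun y => gs y i j) x := by
  rw [θexp]
  simp only [sum4, iv00 φ gs hφpos hgspd, iv0s φ gs hφpos hgspd, ivs0 φ gs hφpos hgspd,
    ivss φ gs hφpos hgspd, Du_00 φ gs hφ hφpos hgspd, Du_0s φ gs hφ hφpos hgspd,
    Du_s0 φ gs hφ hφpos hgspd, Du_ss φ gs hφ hφpos hgspd, mul_zero, zero_mul,
    Finset.sum_const_zero, add_zero, zero_add]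
  rw [Finset.mul_sum]
  exact Finset.sum_congr rfl fun i _ => by
    rw [Finset.mul_sum]
    exact Finset.sum_congr rfl fun j _ => by ring

include hφ hφpos hgspd in
lemma Xlow_0 (x : SpacetimePt) : Xlow φ gs 0 x = 0 := by
  rw [Xlow, sum4]
  simp [uvec_0, uvec_s, Du_00 φ gs hφ hφpos hgspd]

include hφ hφpos hgspd in
lemma Xlow_s (x : SpacetimePt) (j : Fin 3) :
    Xlow φ gs j.succ x = (φ x)⁻¹ * pd j.succ φ x := by
  rw [Xlow, sum4]
  simp [uvec_0, uvec_s, Du_0s φ gs hφ hφpos hgspd]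

include hφpos in
lemma gproj_00 (x : SpacetimePt) : gproj φ gs 0 0 x = 0 := by
  rw [gproj, ulow_0 φ gs hφpos, g4_00]; ring

lemma gproj_0s (x : SpacetimePt) (j : Fin 3) : gproj φ gs 0 j.succ x = 0 := by
  rw [gproj, ulow_s, g4_0s]; ring

lemma gproj_s0 (x : SpacetimePt) (i : Fin 3) : gproj φ gs i.succ 0 x = 0 := by
  rw [gproj, ulow_s, g4_s0]; ring

lemma gproj_ss (x : SpacetimePt) (i j : Fin 3) : gproj φ gs i.succ j.succ x = gs x i j := by
  rw [gproj, ulow_s, g4_ss]; ring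

include hφ hφpos hgspd in
lemma shear_00 (x : SpacetimePt) : shear φ gs 0 0 x = 0 := by
  rw [shear, Du_00 φ gs hφ hφpos hgspd, Xlow_0 φ gs hφ hφpos hgspd, gproj_00 φ gs hφpos]
  ring

include hφ hφpos hgspd in
lemma shear_0s (x : SpacetimePt) (j : Fin 3) : shear φ gs 0 j.succ x = 0 := by
  rw [shear, Du_0s φ gs hφ hφpos hgspd, Xlow_s φ gs hφ hφpos hgspd, gproj_0s φ gs,
    ulow_0 φ gs hφpos]
  have h := φne φ hφpos x
  field_simp
  ring

include hφ hφpos hgspd in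
lemma shear_s0 (x : SpacetimePt) (i : Fin 3) : shear φ gs i.succ 0 x = 0 := by
  rw [shear, Du_s0 φ gs hφ hφpos hgspd, Xlow_0 φ gs hφ hφpos hgspd, gproj_s0 φ gs, ulow_s]
  ring

include hφ hφpos hgspd in
lemma shear_ss (x : SpacetimePt) (i j : Fin 3) :
    shear φ gs i.succ j.succ x
      = (1 / 2) * (φ x)⁻¹ * pd 0 (fun y => gs y i j) x
        - θexp φ gs x / 3 * gs x i j := by
  rw [shear, Du_ss φ gs hφ hφpos hgspd, Xlow_s φ gs hφ hφpos hgspd, gproj_ss φ gs, ulow_s]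
  ring

include hφ hφpos hgspd in
lemma shear2_eq (x : SpacetimePt) :
    shear2 φ gs x
      = ∑ i, ∑ j, ∑ k, ∑ l, gsinv gs x i k * gsinv gs x j l
          * shear φ gs i.succ j.succ x * shear φ gs k.succ l.succ x := by
  rw [shear2]
  simp only [sum4, iv00 φ gs hφpos hgspd, iv0s φ gs hφpos hgspd, ivs0 φ gs hφpos hgspd,
    ivss φ gs hφpos hgspd, shear_00 φ gs hφ hφpos hgspd, shear_0s φ gs hφ hφpos hgspd,
    shear_s0 φ gs hφ hφpos hgspd, mul_zero, zero_mul, Finset.sum_const_zero, add_zero,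
    zero_add, Finset.sum_add_distrib]

include hφpos in
lemma θdot_eq (x : SpacetimePt) : θdot φ gs x = (φ x)⁻¹ * pd 0 (θexp φ gs) x := by
  rw [θdot, sum4]
  simp [uvec_0, uvec_s]

omit hφ hφpos hgs hgspd in
lemma sum4_ext {F G : Fin 3 → Fin 3 → Fin 3 → Fin 3 → ℝ} (h : ∀ i j k l, F i j k l = G i j k l) :
    ∑ i, ∑ j, ∑ k, ∑ l, F i j k l = ∑ i, ∑ j, ∑ k, ∑ l, G i j k l := by
  exact Finset.sum_congr rfl fun i _ => Finset.sum_congr rfl fun j _ =>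
    Finset.sum_congr rfl fun k _ => Finset.sum_congr rfl fun l _ => h i j k l

omit hφ hφpos hgs hgspd in
lemma sum4_comb (F G H I : Fin 3 → Fin 3 → Fin 3 → Fin 3 → ℝ) (a b c d : ℝ) :
    ∑ i, ∑ j, ∑ k, ∑ l, (a * F i j k l + b * G i j k l + c * H i j k l + d * I i j k l)
      = a * (∑ i, ∑ j, ∑ k, ∑ l, F i j k l) + b * (∑ i, ∑ j, ∑ k, ∑ l, G i j k l)
        + c * (∑ i, ∑ j, ∑ k, ∑ l, H i j k l) + d * (∑ i, ∑ j, ∑ k, ∑ l, I i j k l) := by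
  simp [Finset.sum_add_distrib, Finset.mul_sum]

omit hφ hφpos hgs hgspd in
lemma sum_swap4 (F : Fin 3 → Fin 3 → Fin 3 → Fin 3 → ℝ) :
    ∑ i, ∑ j, ∑ k, ∑ l, F i j k l = ∑ i, ∑ j, ∑ k, ∑ l, F k l i j := by
  calc ∑ i, ∑ j, ∑ k, ∑ l, F i j k l
      = ∑ i, ∑ k, ∑ j, ∑ l, F i j k l :=
        Finset.sum_congr rfl fun i _ => Finset.sum_comm
    _ = ∑ i, ∑ k, ∑ l, ∑ j, F i j k l :=
        Finset.sum_congr rfl fun i _ => Finset.sum_congr rfl fun k _ => Finset.sum_comm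
    _ = ∑ k, ∑ i, ∑ l, ∑ j, F i j k l := Finset.sum_comm
    _ = ∑ k, ∑ l, ∑ i, ∑ j, F i j k l :=
        Finset.sum_congr rfl fun k _ => Finset.sum_comm

include hgspd in
lemma BA2 (x : SpacetimePt) (j k : Fin 3) :
    ∑ l, gsinv gs x j l * gs x k l = if j = k then 1 else 0 := by
  rw [Finset.sum_congr rfl fun l _ => by rw [Asym hgspd x k l]]
  exact BA hgspd x j k

include hgspd in
lemma key_contract (x : SpacetimePt) (T : Fin 3 → Fin 3 → ℝ) :
    ∑ i, ∑ j, ∑ k, ∑ l, gsinv gs x i k * gsinv gs x j l * T i j * gs x k l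
      = ∑ i, ∑ j, gsinv gs x i j * T i j := by
  refine Finset.sum_congr rfl fun i _ => Finset.sum_congr rfl fun j _ => ?_
  calc ∑ k, ∑ l, gsinv gs x i k * gsinv gs x j l * T i j * gs x k l
      = ∑ k, (gsinv gs x i k * T i j) * (∑ l, gsinv gs x j l * gs x k l) := by
        refine Finset.sum_congr rfl fun k _ => ?_
        rw [Finset.mul_sum]
        exact Finset.sum_congr rfl fun l _ => by ring
    _ = ∑ k, (gsinv gs x i k * T i j) * (if j = k then 1 else 0) := by
        refine Finset.sum_congr rfl fun k _ => by rw [BA2 gs hgspd x j k]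
    _ = gsinv gs x i j * T i j := by simp

include hgspd in
lemma trBA (x : SpacetimePt) : ∑ i, ∑ j, gsinv gs x i j * gs x i j = 3 := by
  have h : ∀ i : Fin 3, ∑ j, gsinv gs x i j * gs x i j = 1 := by
    intro i
    have := BA2 gs hgspd x i i
    simpa using this
  rw [Finset.sum_congr rfl fun i _ => h i]
  simp

include hφ hφpos hgs hgspd in
lemma shear2_S2 (x : SpacetimePt) :
    shear2 φ gs x
      = (∑ i, ∑ j, ∑ k, ∑ l, gsinv gs x i k * gsinv gs x j l *
          ((1 / 2) * (φ x)⁻¹ * pd 0 (fun y => gs y i j) x) *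
          ((1 / 2) * (φ x)⁻¹ * pd 0 (fun y => gs y k l) x))
        - (θexp φ gs x) ^ 2 / 3 := by
  have hθ : ∑ i, ∑ j, gsinv gs x i j * ((1 / 2) * (φ x)⁻¹ * pd 0 (fun y => gs y i j) x)
      = θexp φ gs x := by
    rw [θexp_eq φ gs hφ hφpos hgspd x, Finset.mul_sum]
    refine Finset.sum_congr rfl fun i _ => ?_
    rw [Finset.mul_sum]
    exact Finset.sum_congr rfl fun j _ => by ring
  have e : ∀ i j k l : Fin 3,
      gsinv gs x i k * gsinv gs x j l * shear φ gs i.succ j.succ x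
          * shear φ gs k.succ l.succ x
        = 1 * (gsinv gs x i k * gsinv gs x j l *
            ((1 / 2) * (φ x)⁻¹ * pd 0 (fun y => gs y i j) x) *
            ((1 / 2) * (φ x)⁻¹ * pd 0 (fun y => gs y k l) x))
          + (-(θexp φ gs x / 3)) * (gsinv gs x i k * gsinv gs x j l *
            ((1 / 2) * (φ x)⁻¹ * pd 0 (fun y => gs y i j) x) * gs x k l)
          + (-(θexp φ gs x / 3)) * (gsinv gs x i k * gsinv gs x j l * gs x i j *
            ((1 / 2) * (φ x)⁻¹ * pd 0 (fun y => gs y k l) x))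
          + (θexp φ gs x / 3 * (θexp φ gs x / 3)) * (gsinv gs x i k * gsinv gs x j l *
            gs x i j * gs x k l) := by
    intro i j k l
    rw [shear_ss φ gs hφ hφpos hgspd x i j, shear_ss φ gs hφ hφpos hgspd x k l]
    ring
  rw [shear2_eq φ gs hφ hφpos hgspd x, sum4_ext e, sum4_comb]
  have hM2 : ∑ i, ∑ j, ∑ k, ∑ l, gsinv gs x i k * gsinv gs x j l * gs x i j *
        ((1 / 2) * (φ x)⁻¹ * pd 0 (fun y => gs y k l) x)
      = ∑ i, ∑ j, gsinv gs x i j * ((1 / 2) * (φ x)⁻¹ * pd 0 (fun y => gs y i j) x) := by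
    rw [sum_swap4]
    rw [sum4_ext (G := fun i j k l => gsinv gs x i k * gsinv gs x j l *
      ((1 / 2) * (φ x)⁻¹ * pd 0 (fun y => gs y i j) x) * gs x k l)
      (fun i j k l => by rw [Bsym hgspd x k i, Bsym hgspd x l j]; ring)]
    exact key_contract gs hgspd x _
  have hM1 := key_contract gs hgspd x
    (fun i j => (1 / 2) * (φ x)⁻¹ * pd 0 (fun y => gs y i j) x)
  have hM3 := key_contract gs hgspd x (fun i j => gs x i j)
  rw [hM1, hM2, hM3, trBA gs hgspd x, hθ]
  ring

include hφ hφpos hgs hgspd in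
lemma pdΓ4_s00 (c : Fin 4) (x : SpacetimePt) (i : Fin 3) :
    pd c (Γ4 φ gs i.succ 0 0) x
      = ∑ l, (pd c (fun y => gsinv gs y i l) x * (φ x * pd l.succ φ x)
          + gsinv gs x i l * (pd c φ x * pd l.succ φ x + φ x * pd c (pd l.succ φ) x)) := by
  have dφ : ∀ y, DifferentiableAt ℝ φ y := fun y => diffAt (sφ φ hφ) y
  have dpφ : ∀ (m : Fin 4) (y : SpacetimePt), DifferentiableAt ℝ (pd m φ) y :=
    fun m y => diffAt (contDiff_pd (sφ φ hφ) m) y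
  have dB : ∀ (i j : Fin 3) (y : SpacetimePt), DifferentiableAt ℝ (fun z => gsinv gs z i j) y :=
    fun i j y => diffAt (sB gs hgs hgspd i j) y
  rw [pd_congr (fun y => Γ4_s00 φ gs hφ hφpos hgspd y i) c x]
  rw [pd_sum (F := fun l y => gsinv gs y i l * (φ y * pd l.succ φ y)) Finset.univ
    (fun l _ => (dB i l x).mul ((dφ x).mul (dpφ l.succ x))) c]
  refine Finset.sum_congr rfl fun l _ => ?_
  rw [pd_mul (f := fun y => gsinv gs y i l) (g := fun y => φ y * pd l.succ φ y)
    (dB i l x) ((dφ x).mul (dpφ l.succ x)) c]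
  rw [pd_mul (dφ x) (dpφ l.succ x) c]

include hφ hφpos hgs hgspd in
lemma pdΓ4_ss0 (c : Fin 4) (x : SpacetimePt) (i j : Fin 3) :
    pd c (Γ4 φ gs i.succ j.succ 0) x
      = (1 / 2) * ∑ l, (pd c (fun y => gsinv gs y i l) x * pd 0 (fun y => gs y j l) x
          + gsinv gs x i l * pd c (pd 0 (fun y => gs y j l)) x) := by
  have dpA : ∀ (m : Fin 4) (i j : Fin 3) (y : SpacetimePt),
      DifferentiableAt ℝ (pd m fun z => gs z i j) y :=
    fun m i j y => diffAt (contDiff_pd (sA gs hgs i j) m) y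
  have dB : ∀ (i j : Fin 3) (y : SpacetimePt), DifferentiableAt ℝ (fun z => gsinv gs z i j) y :=
    fun i j y => diffAt (sB gs hgs hgspd i j) y
  rw [pd_congr (fun y => Γ4_ss0 φ gs hφ hφpos hgspd y i j) c x]
  rw [pd_const_mul (f := fun y => ∑ l, gsinv gs y i l * pd 0 (fun z => gs z j l) y)
    (DifferentiableAt.fun_sum (fun l _ => (dB i l x).fun_mul (dpA 0 j l x))) (1 / 2) c]
  rw [pd_sum (F := fun l y => gsinv gs y i l * pd 0 (fun z => gs z j l) y) Finset.univ
    (fun l _ => (dB i l x).mul (dpA 0 j l x)) c]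
  refine congrArg _ (Finset.sum_congr rfl fun l _ => ?_)
  rw [pd_mul (f := fun y => gsinv gs y i l) (g := fun y => pd 0 (fun z => gs z j l) y)
    (dB i l x) (dpA 0 j l x) c]

include hφ hφpos hgs hgspd in
lemma pdθ (x : SpacetimePt) :
    pd 0 (θexp φ gs) x
      = (1 / 2) * (-(pd 0 φ x) / (φ x) ^ 2
            * (∑ i, ∑ j, gsinv gs x i j * pd 0 (fun y => gs y i j) x)
          + (φ x)⁻¹ * ∑ i, ∑ j, (pd 0 (fun y => gsinv gs y i j) x
              * pd 0 (fun y => gs y i j) x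
            + gsinv gs x i j * pd 0 (pd 0 (fun y => gs y i j)) x)) := by
  have dφ : ∀ y, DifferentiableAt ℝ φ y := fun y => diffAt (sφ φ hφ) y
  have dpA : ∀ (m : Fin 4) (i j : Fin 3) (y : SpacetimePt),
      DifferentiableAt ℝ (pd m fun z => gs z i j) y :=
    fun m i j y => diffAt (contDiff_pd (sA gs hgs i j) m) y
  have dB : ∀ (i j : Fin 3) (y : SpacetimePt), DifferentiableAt ℝ (fun z => gsinv gs z i j) y :=
    fun i j y => diffAt (sB gs hgs hgspd i j) y
  have dS : ∀ y, DifferentiableAt ℝ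
      (fun z => ∑ i, ∑ j, gsinv gs z i j * pd 0 (fun w => gs w i j) z) y :=
    fun y => DifferentiableAt.fun_sum (fun i _ => DifferentiableAt.fun_sum
      (fun j _ => (dB i j y).fun_mul (dpA 0 i j y)))
  have hcong : ∀ y, θexp φ gs y
      = (1 / 2) * ((φ y)⁻¹ * ∑ i, ∑ j, gsinv gs y i j * pd 0 (fun w => gs w i j) y) := by
    intro y
    rw [θexp_eq φ gs hφ hφpos hgspd y]
    ring
  rw [pd_congr hcong 0 x]
  rw [pd_const_mul (f := fun y => (φ y)⁻¹
      * ∑ i, ∑ j, gsinv gs y i j * pd 0 (fun w => gs w i j) y)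
    (((dφ x).inv (φne φ hφpos x)).mul (dS x)) (1 / 2) 0]
  rw [pd_mul (f := fun y => (φ y)⁻¹)
    (g := fun y => ∑ i, ∑ j, gsinv gs y i j * pd 0 (fun w => gs w i j) y)
    ((dφ x).inv (φne φ hφpos x)) (dS x) 0]
  rw [pd_inv (dφ x) (φne φ hφpos x) 0]
  rw [pd_sum (F := fun i y => ∑ j, gsinv gs y i j * pd 0 (fun w => gs w i j) y) Finset.univ
    (fun i _ => DifferentiableAt.fun_sum (fun j _ => (dB i j x).fun_mul (dpA 0 i j x))) 0]
  have hrow : ∀ i : Fin 3,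
      pd 0 (fun y => ∑ j, gsinv gs y i j * pd 0 (fun w => gs w i j) y) x
        = ∑ j, (pd 0 (fun y => gsinv gs y i j) x * pd 0 (fun y => gs y i j) x
            + gsinv gs x i j * pd 0 (pd 0 (fun y => gs y i j)) x) := by
    intro i
    rw [pd_sum (F := fun j y => gsinv gs y i j * pd 0 (fun w => gs w i j) y) Finset.univ
      (fun j _ => (dB i j x).mul (dpA 0 i j x)) 0]
    refine Finset.sum_congr rfl fun j _ => ?_
    rw [pd_mul (f := fun y => gsinv gs y i j) (g := fun y => pd 0 (fun w => gs w i j) y)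
      (dB i j x) (dpA 0 i j x) 0]
  rw [Finset.sum_congr rfl fun i _ => hrow i]

include hφ hφpos hgs hgspd in
lemma pdXs (x : SpacetimePt) (i j : Fin 3) :
    pd3 i (Xs φ gs j) x
      = -(((φ x) ^ 2)⁻¹ * (pd i.succ φ x * pd j.succ φ x))
        + (φ x)⁻¹ * pd i.succ (pd j.succ φ) x := by
  have dφ : ∀ y, DifferentiableAt ℝ φ y := fun y => diffAt (sφ φ hφ) y
  have dpφ : ∀ (m : Fin 4) (y : SpacetimePt), DifferentiableAt ℝ (pd m φ) y :=
    fun m y => diffAt (contDiff_pd (sφ φ hφ) m) y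
  rw [pd3, pd_congr (f := Xs φ gs j) (fun y => Xlow_s φ gs hφ hφpos hgspd y j) i.succ x]
  rw [pd_mul (f := fun y => (φ y)⁻¹) (g := fun y => pd j.succ φ y)
    ((dφ x).inv (φne φ hφpos x)) (dpφ j.succ x) i.succ]
  rw [pd_inv (dφ x) (φne φ hφpos x) i.succ]
  have h := φne φ hφpos x
  field_simp

include hφ hφpos hgs hgspd in
lemma Xs_eq (x : SpacetimePt) (j : Fin 3) :
    Xs φ gs j x = (φ x)⁻¹ * pd j.succ φ x := Xlow_s φ gs hφ hφpos hgspd x j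

include hgspd in
lemma Bc1 (x : SpacetimePt) : gsinv gs x 1 0 = gsinv gs x 0 1 := Bsym hgspd x 1 0
include hgspd in
lemma Bc2 (x : SpacetimePt) : gsinv gs x 2 0 = gsinv gs x 0 2 := Bsym hgspd x 2 0
include hgspd in
lemma Bc3 (x : SpacetimePt) : gsinv gs x 2 1 = gsinv gs x 1 2 := Bsym hgspd x 2 1

include hgspd in
lemma Ac1 (x : SpacetimePt) : gs x 1 0 = gs x 0 1 := Asym hgspd x 1 0
include hgspd in
lemma Ac2 (x : SpacetimePt) : gs x 2 0 = gs x 0 2 := Asym hgspd x 2 0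
include hgspd in
lemma Ac3 (x : SpacetimePt) : gs x 2 1 = gs x 1 2 := Asym hgspd x 2 1

include hgspd in
lemma pdAc1 (c : Fin 4) (x : SpacetimePt) :
    pd c (fun y => gs y 1 0) x = pd c (fun y => gs y 0 1) x :=
  pd_congr (fun y => Asym hgspd y 1 0) c x
include hgspd in
lemma pdAc2 (c : Fin 4) (x : SpacetimePt) :
    pd c (fun y => gs y 2 0) x = pd c (fun y => gs y 0 2) x :=
  pd_congr (fun y => Asym hgspd y 2 0) c x
include hgspd in
lemma pdAc3 (c : Fin 4) (x : SpacetimePt) :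
    pd c (fun y => gs y 2 1) x = pd c (fun y => gs y 1 2) x :=
  pd_congr (fun y => Asym hgspd y 2 1) c x

include hgspd in
lemma pdpdAc1 (c c' : Fin 4) (x : SpacetimePt) :
    pd c (pd c' (fun y => gs y 1 0)) x = pd c (pd c' (fun y => gs y 0 1)) x :=
  pd_congr (fun y => pd_congr (fun z => Asym hgspd z 1 0) c' y) c x
include hgspd in
lemma pdpdAc2 (c c' : Fin 4) (x : SpacetimePt) :
    pd c (pd c' (fun y => gs y 2 0)) x = pd c (pd c' (fun y => gs y 0 2)) x :=
  pd_congr (fun y => pd_congr (fun z => Asym hgspd z 2 0) c' y) c x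
include hgspd in
lemma pdpdAc3 (c c' : Fin 4) (x : SpacetimePt) :
    pd c (pd c' (fun y => gs y 2 1)) x = pd c (pd c' (fun y => gs y 1 2)) x :=
  pd_congr (fun y => pd_congr (fun z => Asym hgspd z 2 1) c' y) c x

set_option maxHeartbeats 2000000 in
include hφ hφpos hgs hgspd in
lemma geo (x : SpacetimePt) :
    (φ x)⁻¹ * pd 0 (θexp φ gs) x
      = -(∑ i, ∑ j, ∑ k, ∑ l, gsinv gs x i k * gsinv gs x j l *
            ((1 / 2) * (φ x)⁻¹ * pd 0 (fun y => gs y i j) x) *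
            ((1 / 2) * (φ x)⁻¹ * pd 0 (fun y => gs y k l) x))
        - ((φ x) ^ 2)⁻¹ * Ric4 φ gs 0 0 x + divX φ gs x + X2 φ gs x := by
  have h := φne φ hφpos x
  have h0 : Riem4 φ gs 0 0 0 0 x = 0 := by rw [Riem4]; simp
  rw [pdθ φ gs hφ hφpos hgs hgspd x, Ric4,
    sum4 (fun a => Riem4 φ gs a 0 a 0 x), h0, zero_add]
  simp only [Riem4, sum4, divX, D3X, X2,
    Γ4_000 φ gs hφ hφpos hgspd, Γ4_00s φ gs hφ hφpos hgspd, Γ4_0s0 φ gs hφ hφpos hgspd,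
    Γ4_0ss φ gs hφ hφpos hgspd, Γ4_s00 φ gs hφ hφpos hgspd, Γ4_s0s φ gs hφ hφpos hgspd,
    Γ4_ss0 φ gs hφ hφpos hgspd, Γ4_sss φ gs hφpos hgspd,
    pdΓ4_s00 φ gs hφ hφpos hgs hgspd, pdΓ4_ss0 φ gs hφ hφpos hgs hgspd,
    pdXs φ gs hφ hφpos hgs hgspd, Xs_eq φ gs hφ hφpos hgs hgspd,
    pd_B hgs hgspd]
  simp only [Γ3, pd3, Fin.sum_univ_three]
  simp only [Bc1 gs hgspd, Bc2 gs hgspd, Bc3 gs hgspd, Ac1 gs hgspd, Ac2 gs hgspd,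
    Ac3 gs hgspd, pdAc1 gs hgspd, pdAc2 gs hgspd, pdAc3 gs hgspd,
    pdpdAc1 gs hgspd, pdpdAc2 gs hgspd, pdpdAc3 gs hgspd]
  field_simp
  ring

omit hφ hφpos hgs hgspd in
lemma sum2_comb (F G : Fin 4 → Fin 4 → ℝ) (b c : ℝ) :
    ∑ a, ∑ d, (F a d + b * G a d + c * G a d)
      = (∑ a, ∑ d, F a d) + b * (∑ a, ∑ d, G a d) + c * (∑ a, ∑ d, G a d) := by
  simp [Finset.sum_add_distrib, Finset.mul_sum]

omit hφ hφpos hgs hgspd in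
lemma sum2_comb5 (F1 F2 F3 F4 F5 : Fin 4 → Fin 4 → ℝ) (b c : ℝ) :
    ∑ a, ∑ d, (b * F1 a d + F2 a d + F3 a d + c * F4 a d + F5 a d)
      = b * (∑ a, ∑ d, F1 a d) + (∑ a, ∑ d, F2 a d) + (∑ a, ∑ d, F3 a d)
        + c * (∑ a, ∑ d, F4 a d) + (∑ a, ∑ d, F5 a d) := by
  simp [Finset.sum_add_distrib, Finset.mul_sum]

include hφpos hgspd in
lemma trg4 (x : SpacetimePt) : ∑ a, ∑ b, ginv4 φ gs x a b * g4 φ gs x a b = 4 := by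
  have h := φne φ hφpos x
  simp only [sum4, iv00 φ gs hφpos hgspd, iv0s φ gs hφpos hgspd, ivs0 φ gs hφpos hgspd,
    ivss φ gs hφpos hgspd, g4_00, g4_0s, g4_s0, g4_ss, mul_zero, zero_mul,
    Finset.sum_const_zero, add_zero, zero_add]
  rw [trBA gs hgspd x]
  field_simp
  ring

include hφpos hgspd in
lemma uu (x : SpacetimePt) :
    ∑ a, ∑ b, ginv4 φ gs x a b * (ulow φ gs a x * ulow φ gs b x) = -1 := by
  have h := φne φ hφpos x
  simp only [sum4, iv00 φ gs hφpos hgspd, iv0s φ gs hφpos hgspd, ivs0 φ gs hφpos hgspd,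
    ivss φ gs hφpos hgspd, ulow_0 φ gs hφpos, ulow_s, mul_zero, zero_mul,
    Finset.sum_const_zero, add_zero, zero_add]
  field_simp

include hφpos hgspd in
lemma trgproj (x : SpacetimePt) :
    ∑ a, ∑ b, ginv4 φ gs x a b * gproj φ gs a b x = 3 := by
  simp only [sum4, iv00 φ gs hφpos hgspd, iv0s φ gs hφpos hgspd, ivs0 φ gs hφpos hgspd,
    ivss φ gs hφpos hgspd, gproj_00 φ gs hφpos, gproj_0s φ gs, gproj_s0 φ gs, gproj_ss φ gs,
    mul_zero, zero_mul, Finset.sum_const_zero, add_zero, zero_add]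
  exact trBA gs hgspd x

include hφpos hgspd in
lemma qu1 (x : SpacetimePt) (q : SpacetimePt → Fin 4 → ℝ) (hq0 : q x 0 = 0) :
    ∑ a, ∑ b, ginv4 φ gs x a b * (q x a * ulow φ gs b x) = 0 := by
  simp only [sum4, iv00 φ gs hφpos hgspd, iv0s φ gs hφpos hgspd, ivs0 φ gs hφpos hgspd,
    ivss φ gs hφpos hgspd, ulow_0 φ gs hφpos, ulow_s, hq0, mul_zero, zero_mul,
    Finset.sum_const_zero, add_zero, zero_add]

include hφpos hgspd in
lemma qu2 (x : SpacetimePt) (q : SpacetimePt → Fin 4 → ℝ) (hq0 : q x 0 = 0) :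
    ∑ a, ∑ b, ginv4 φ gs x a b * (q x b * ulow φ gs a x) = 0 := by
  simp only [sum4, iv00 φ gs hφpos hgspd, iv0s φ gs hφpos hgspd, ivs0 φ gs hφpos hgspd,
    ivss φ gs hφpos hgspd, ulow_0 φ gs hφpos, ulow_s, hq0, mul_zero, zero_mul,
    Finset.sum_const_zero, add_zero, zero_add]

end Components

end Aux
end GR

open GR in
/-- **The Raychaudhuri equation.**  Let `(M⁴, 𝐠)` satisfy the Einstein equations with
irrotational unit timelike flow `u` (expressed in synchronous coordinates, where
`𝐠 = -φ² dt² + g_{ij} dx^i dx^j` and `u = φ⁻¹ ∂_t`), expansion `θ`, trace-free shear `σ`,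
acceleration `X = ∇_u u`, energy density `μ` and pressure `p` from the decomposition
`κ T_{ab} = μ u_a u_b + q_a u_b + q_b u_a + p g_{ab} + π_{ab}`.  Then
`θ̇ = -|σ|² - (1/3) θ² - (1/2)(μ + 3p) + Λ + div X + |X|²`,
where `θ̇ = u(θ)` and `div` is the spatial divergence on the slice orthogonal to `u`. -/
theorem raychaudhuri_equation
    (φ : SpacetimePt → ℝ) (gs : SpacetimePt → Matrix (Fin 3) (Fin 3) ℝ)
    (hφ : ContDiff ℝ (⊤ : ℕ∞) φ) (hφpos : ∀ x, 0 < φ x)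
    (hgs : ∀ i j : Fin 3, ContDiff ℝ (⊤ : ℕ∞) fun x => gs x i j)
    (hgspd : ∀ x, (gs x).PosDef)
    -- the decomposition of the stress-energy tensor `κ T_{ab} = μ u_a u_b + q_a u_b
    -- + q_b u_a + p g_{ab} + π_{ab}` with respect to the flow of matter:
    (μ p : SpacetimePt → ℝ) (q : SpacetimePt → Fin 4 → ℝ)
    (πaniso : SpacetimePt → Fin 4 → Fin 4 → ℝ) (Λ : ℝ)
    (hq : ∀ x, ∑ a, q x a * uvec φ x a = 0)
    (hπu : ∀ x a, ∑ b, πaniso x a b * uvec φ x b = 0)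
    (hπsym : ∀ x a b, πaniso x a b = πaniso x b a)
    (hπtf : ∀ x, ∑ a, ∑ b, ginv4 φ gs x a b * πaniso x a b = 0)
    -- the Einstein equations `𝐑_{ab} - (1/2) 𝐑 𝐠_{ab} + Λ 𝐠_{ab} = κ T_{ab}`:
    (hEinstein : ∀ x a b,
      Ric4 φ gs a b x - (1 / 2) * Scal4 φ gs x * g4 φ gs x a b + Λ * g4 φ gs x a b
        = μ x * ulow φ gs a x * ulow φ gs b x + q x a * ulow φ gs b x
          + q x b * ulow φ gs a x + p x * gproj φ gs a b x + πaniso x a b) :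
    ∀ x : SpacetimePt,
      θdot φ gs x
        = -shear2 φ gs x - (1 / 3) * (θexp φ gs x) ^ 2 - (1 / 2) * (μ x + 3 * p x)
          + Λ + divX φ gs x + X2 φ gs x := by
  intro x
  have hne : φ x ≠ 0 := ne_of_gt (hφpos x)
  have hq0 : q x 0 = 0 := by
    have h1 := hq x
    rw [GR.Aux.sum4] at h1
    simp only [GR.Aux.uvec_0, GR.Aux.uvec_s, mul_zero, Finset.sum_const_zero, add_zero] at h1
    exact (mul_eq_zero.mp h1).resolve_right (inv_ne_zero hne)
  have hπ00 : πaniso x 0 0 = 0 := by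
    have h1 := hπu x 0
    rw [GR.Aux.sum4] at h1
    simp only [GR.Aux.uvec_0, GR.Aux.uvec_s, mul_zero, Finset.sum_const_zero, add_zero] at h1
    exact (mul_eq_zero.mp h1).resolve_right (inv_ne_zero hne)
  have hsum : ∑ a, ∑ b, ginv4 φ gs x a b *
      (Ric4 φ gs a b x - 1 / 2 * Scal4 φ gs x * g4 φ gs x a b + Λ * g4 φ gs x a b)
      = ∑ a, ∑ b, ginv4 φ gs x a b *
      (μ x * ulow φ gs a x * ulow φ gs b x + q x a * ulow φ gs b x + q x b * ulow φ gs a x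
        + p x * gproj φ gs a b x + πaniso x a b) :=
    Finset.sum_congr rfl fun a _ => Finset.sum_congr rfl fun b _ => by rw [hEinstein x a b]
  have hL : ∑ a, ∑ b, ginv4 φ gs x a b *
      (Ric4 φ gs a b x - 1 / 2 * Scal4 φ gs x * g4 φ gs x a b + Λ * g4 φ gs x a b)
      = Scal4 φ gs x + (-(1 / 2) * Scal4 φ gs x) * 4 + Λ * 4 := by
    have := GR.Aux.sum2_comb (fun a b => ginv4 φ gs x a b * Ric4 φ gs a b x)
      (fun a b => ginv4 φ gs x a b * g4 φ gs x a b)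
      (-(1 / 2) * Scal4 φ gs x) Λ
    rw [Finset.sum_congr rfl (fun a _ => Finset.sum_congr rfl (fun b _ => by
      show ginv4 φ gs x a b *
          (Ric4 φ gs a b x - 1 / 2 * Scal4 φ gs x * g4 φ gs x a b + Λ * g4 φ gs x a b)
        = ginv4 φ gs x a b * Ric4 φ gs a b x
          + (-(1 / 2) * Scal4 φ gs x) * (ginv4 φ gs x a b * g4 φ gs x a b)
          + Λ * (ginv4 φ gs x a b * g4 φ gs x a b)
      ring)), this, GR.Aux.trg4 φ gs hφpos hgspd x]
    rfl
  have hR : ∑ a, ∑ b, ginv4 φ gs x a b *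
      (μ x * ulow φ gs a x * ulow φ gs b x + q x a * ulow φ gs b x + q x b * ulow φ gs a x
        + p x * gproj φ gs a b x + πaniso x a b)
      = μ x * (-1) + 0 + 0 + p x * 3 + 0 := by
    have := GR.Aux.sum2_comb5 (fun a b => ginv4 φ gs x a b * (ulow φ gs a x * ulow φ gs b x))
      (fun a b => ginv4 φ gs x a b * (q x a * ulow φ gs b x))
      (fun a b => ginv4 φ gs x a b * (q x b * ulow φ gs a x))
      (fun a b => ginv4 φ gs x a b * gproj φ gs a b x)
      (fun a b => ginv4 φ gs x a b * πaniso x a b)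
      (μ x) (p x)
    rw [Finset.sum_congr rfl (fun a _ => Finset.sum_congr rfl (fun b _ => by
      show ginv4 φ gs x a b *
          (μ x * ulow φ gs a x * ulow φ gs b x + q x a * ulow φ gs b x + q x b * ulow φ gs a x
            + p x * gproj φ gs a b x + πaniso x a b)
        = μ x * (ginv4 φ gs x a b * (ulow φ gs a x * ulow φ gs b x))
          + ginv4 φ gs x a b * (q x a * ulow φ gs b x)
          + ginv4 φ gs x a b * (q x b * ulow φ gs a x)
          + p x * (ginv4 φ gs x a b * gproj φ gs a b x)
          + ginv4 φ gs x a b * πaniso x a b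
      ring)), this, GR.Aux.uu φ gs hφpos hgspd x, GR.Aux.qu1 φ gs hφpos hgspd x q hq0,
      GR.Aux.qu2 φ gs hφpos hgspd x q hq0, GR.Aux.trgproj φ gs hφpos hgspd x, hπtf x]
  have htr : Scal4 φ gs x = 4 * Λ + μ x - 3 * p x := by
    have := hL.symm.trans (hsum.trans hR)
    linarith
  have e00 := hEinstein x 0 0
  rw [GR.Aux.g4_00 φ gs, GR.Aux.ulow_0 φ gs hφpos, GR.Aux.gproj_00 φ gs hφpos, hq0, hπ00,
    htr] at e00
  have hRic' : Ric4 φ gs 0 0 x = ((1 / 2) * (μ x + 3 * p x) - Λ) * (φ x) ^ 2 := by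
    linear_combination e00
  have hRic : ((φ x) ^ 2)⁻¹ * Ric4 φ gs 0 0 x = (1 / 2) * (μ x + 3 * p x) - Λ := by
    rw [hRic']
    field_simp
  rw [GR.Aux.θdot_eq φ gs hφpos x, GR.Aux.shear2_S2 φ gs hφ hφpos hgs hgspd x,
    GR.Aux.geo φ gs hφ hφpos hgs hgspd x, hRic]
  ring
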